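/- Let u be the unique minimizer of J over V and let u_h^{ms} = R_h(u_h), where u_h minimizes v_h ↦ J(R(v_h)) over V_h. Then u - u_h^{ms} = R_f(f), i.e., the global error of the HMM approximation equals the fine-scale remainder, which lies in V_f and satisfies a(u - u_h^{ms}, w) = f(w) for all w ∈ V_f. -/

import Mathlib

/-!
A minimizer over a coset `x + W` satisfies the Euler–Lagrange equation in the directions of `W`:
along each line `t ↦ x + t • w` the energy is a quadratic in `t` minimized at `t = 0`, so its
linear coefficient vanishes. Minimizing `J ∘ R` over `V_h` and then `J` over the fibre of `P_0`
is global minimization, hence `R u_h = u` by coercivity and `P_0 (u - R_h u_h) = u_h - u_h = 0`.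
On `V_f` we have `a(u, w) = f(w)` and `a(R_h u_h, w) = 0`, so `u - R_h u_h` solves the same
coercive problem on `V_f` as `R_f(f)`, and the two coincide.
-/

lemma eq_zero_of_forall_mul_add_mul_sq_nonneg {b c : ℝ} (h : ∀ t : ℝ, 0 ≤ b * t + c * t ^ 2) :
    b = 0 := by
  have hdiscr := discrim_le_zero (a := c) (b := b) (c := 0) fun t => by linarith [h t]
  have hb : b ^ 2 ≤ 0 := by simpa [discrim] using hdiscr
  exact pow_eq_zero_iff two_ne_zero |>.mp (le_antisymm hb (sq_nonneg b))

section Energy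

variable {V : Type*} [AddCommGroup V] [Module ℝ V] (a : V →ₗ[ℝ] V →ₗ[ℝ] ℝ)

noncomputable def energy (ℓ : V →ₗ[ℝ] ℝ) (v : V) : ℝ := 1 / 2 * a v v - ℓ v

lemma apply_eq_of_forall_energy_le (hsymm : ∀ u v : V, a u v = a v u) {ℓ : V →ₗ[ℝ] ℝ}
    (W : Submodule ℝ V) {x : V} (hmin : ∀ w ∈ W, energy a ℓ x ≤ energy a ℓ (x + w))
    {w : V} (hw : w ∈ W) : a x w = ℓ w := by
  refine sub_eq_zero.mp <| eq_zero_of_forall_mul_add_mul_sq_nonneg (c := 1 / 2 * a w w) fun t => ?_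
  have hline := hmin (t • w) (W.smul_mem t hw)
  simp only [energy, map_add, map_smul, LinearMap.add_apply, LinearMap.smul_apply,
    smul_eq_mul, hsymm w x] at hline
  linarith

end Energy

lemma eq_of_apply_sub_eq {V : Type*} [NormedAddCommGroup V] [Module ℝ V]
    (a : V →ₗ[ℝ] V →ₗ[ℝ] ℝ) {α : ℝ} (hα : 0 < α) (hcoer : ∀ v : V, α * ‖v‖ ^ 2 ≤ a v v)
    {x y : V} (h : a x (x - y) = a y (x - y)) : x = y := by
  have hzero : a (x - y) (x - y) = 0 := by rw [LinearMap.map_sub₂, h, sub_self]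
  have hsq : ‖x - y‖ ^ 2 ≤ 0 := by nlinarith [hcoer (x - y), hzero]
  simpa [sub_eq_zero] using hsq

theorem stmt6_general
    {V : Type*} [NormedAddCommGroup V] [InnerProductSpace ℝ V]
    (a : V →ₗ[ℝ] V →ₗ[ℝ] ℝ)
    (hsymm : ∀ u v : V, a u v = a v u)
    (α : ℝ) (hα : 0 < α) (hcoer : ∀ v : V, α * ‖v‖ ^ 2 ≤ a v v)
    (f : V →L[ℝ] ℝ)
    (J J0 : V → ℝ)
    (hJ : ∀ v, J v = (1 / 2) * a v v - f v)
    (hJ0 : ∀ v, J0 v = (1 / 2) * a v v)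
    (Vh : Submodule ℝ V) [CompleteSpace Vh]
    (P0 : V → V) (hP0 : ∀ v, P0 v = (Vh.orthogonalProjection v : V))
    (Vf : Set V) (hVf : Vf = {v : V | P0 v = 0})
    (R Rh : V → V)
    (hR : ∀ vh ∈ Vh, P0 (R vh) = vh ∧ ∀ v : V, P0 v = vh → J (R vh) ≤ J v)
    (hRh : ∀ vh ∈ Vh, P0 (Rh vh) = vh ∧ ∀ v : V, P0 v = vh → J0 (Rh vh) ≤ J0 v)
    (Rff : V) (hRff : Rff ∈ Vf ∧ ∀ v ∈ Vf, J Rff ≤ J v)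
    (u : V) (hu : ∀ v : V, J u ≤ J v)
    (uh : V) (huh : uh ∈ Vh) (huhmin : ∀ vh ∈ Vh, J (R uh) ≤ J (R vh))
    (uhms : V) (huhms : uhms = Rh uh) :
    u - uhms ∈ Vf ∧ u - uhms = Rff ∧ ∀ w ∈ Vf, a (u - uhms) w = f w := by
  obtain rfl : P0 = Vh.starProjection := funext hP0
  obtain rfl : Vf = Vhᗮ := by ext; simp [hVf, Submodule.starProjection_apply_eq_zero_iff]
  obtain rfl : J = energy a f := funext hJ
  obtain rfl : J0 = energy a 0 := funext fun v => by simp [hJ0, energy]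
  subst huhms
  have hu_EL (w : V) : a u w = f w :=
    apply_eq_of_forall_energy_le a hsymm ⊤ (fun _ _ => hu _) (Submodule.mem_top (x := w))
  have hPu : Vh.starProjection u ∈ Vh := Vh.starProjection_apply_mem u
  have hRuh_min (v : V) : energy a f (R uh) ≤ energy a f v :=
    (huhmin _ hPu).trans <| ((hR _ hPu).2 u rfl).trans (hu v)
  have hRuh : R uh = u := eq_of_apply_sub_eq a hα hcoer <| by
    rw [apply_eq_of_forall_energy_le a hsymm ⊤ (fun _ _ => hRuh_min _) Submodule.mem_top, hu_EL]
    rfl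
  obtain ⟨hPRh, hRh_min⟩ := hRh uh huh
  have hRh_orth (w : V) (hw : w ∈ Vhᗮ) : a (Rh uh) w = 0 :=
    apply_eq_of_forall_energy_le a hsymm Vhᗮ (fun _ hw' => hRh_min _ <| by
      rw [map_add, Vh.starProjection_apply_eq_zero_iff.mpr hw', add_zero, hPRh]) hw
  have hRff_orth (w : V) (hw : w ∈ Vhᗮ) : a Rff w = f w :=
    apply_eq_of_forall_energy_le a hsymm Vhᗮ (fun _ hw' => hRff.2 _ (add_mem hRff.1 hw')) hw
  have hmem : u - Rh uh ∈ Vhᗮ := by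
    rw [← Vh.starProjection_apply_eq_zero_iff, map_sub, ← hRuh, (hR uh huh).1, hPRh,
      sub_self]
  have hvar (w : V) (hw : w ∈ Vhᗮ) : a (u - Rh uh) w = f w := by
    rw [LinearMap.map_sub₂, hu_EL, hRh_orth w hw, sub_zero]
  refine ⟨hmem, eq_of_apply_sub_eq a hα hcoer ?_, hvar⟩
  rw [hvar _ (sub_mem hmem hRff.1), hRff_orth _ (sub_mem hmem hRff.1)]

/-- Let `u` be the minimizer of `J` over `V` and `u_h^ms = R_h(u_h)` where
`u_h` minimizes `v_h ↦ J(R(v_h))` over `V_h`. Then `u - u_h^ms = R_f(f)`: it lies in `V_f`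
and satisfies `a(u - u_h^ms, w) = f(w)` for all `w ∈ V_f`. -/
theorem stmt6
    {V : Type*} [NormedAddCommGroup V] [InnerProductSpace ℝ V] [CompleteSpace V]
    (a : V →ₗ[ℝ] V →ₗ[ℝ] ℝ)
    (hsymm : ∀ u v : V, a u v = a v u)
    (M : ℝ) (hcont : ∀ u v : V, |a u v| ≤ M * ‖u‖ * ‖v‖)
    (α : ℝ) (hα : 0 < α) (hcoer : ∀ v : V, α * ‖v‖ ^ 2 ≤ a v v)
    (f : V →L[ℝ] ℝ)
    (J J0 : V → ℝ)
    (hJ : ∀ v, J v = (1 / 2) * a v v - f v)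
    (hJ0 : ∀ v, J0 v = (1 / 2) * a v v)
    (Vh : Submodule ℝ V) [CompleteSpace Vh]
    (P0 : V → V) (hP0 : ∀ v, P0 v = (Vh.orthogonalProjection v : V))
    (Vf : Set V) (hVf : Vf = {v : V | P0 v = 0})
    (R Rh : V → V)
    (hR : ∀ vh ∈ Vh, P0 (R vh) = vh ∧ ∀ v : V, P0 v = vh → J (R vh) ≤ J v)
    (hRh : ∀ vh ∈ Vh, P0 (Rh vh) = vh ∧ ∀ v : V, P0 v = vh → J0 (Rh vh) ≤ J0 v)
    (Rff : V) (hRff : Rff ∈ Vf ∧ ∀ v ∈ Vf, J Rff ≤ J v)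
    (u : V) (hu : ∀ v : V, J u ≤ J v)
    (uh : V) (huh : uh ∈ Vh) (huhmin : ∀ vh ∈ Vh, J (R uh) ≤ J (R vh))
    (uhms : V) (huhms : uhms = Rh uh) :
    u - uhms ∈ Vf ∧ u - uhms = Rff ∧ ∀ w ∈ Vf, a (u - uhms) w = f w :=
  stmt6_general a hsymm α hα hcoer f J J0 hJ hJ0 Vh P0 hP0 Vf hVf R Rh hR hRh Rff hRff u hu uh huh
    huhmin uhms huhms
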